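/- With a_i = w_s n_i + w_d n_{3-i} for i = 1,2, the matrix I - A̅ equals the block matrix [[a_1 I_{r1} - w_s J_{r1,r1}, -w_d J_{r1,r2}],[-w_d J_{r2,r1}, a_2 I_{r2} - w_s J_{r2,r2}]], and there exist real constants w̃_{s1}, w̃_{s2}, w̃_d (depending only on w_s, w_d, r1, r2, n1, n2) such that (I - A̅)^{-1} = [[(1/a_1)(I_{r1} - w̃_{s1} J_{r1,r1}), w̃_d J_{r1,r2}],[w̃_d J_{r2,r1}, (1/a_2)(I_{r2} - w̃_{s2} J_{r2,r2})]]. -/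
import Mathlib


open Matrix BigOperators

/-- A generic two-community block matrix: within-block entries are `d + o` on the diagonal
and `o` off the diagonal (`d1, o1` for block 1, `d2, o2` for block 2), and all
cross-block entries equal `off`. -/
def blk (r1 r2 : ℕ) (d1 o1 off d2 o2 : ℝ) :
    Matrix (Fin (r1 + r2)) (Fin (r1 + r2)) ℝ :=
  fun k l =>
    if (k : ℕ) < r1 then
      if (l : ℕ) < r1 then (if k = l then d1 else 0) + o1
      else off
    else
      if (l : ℕ) < r1 then off
      else (if k = l then d2 else 0) + o2

/-- The expected regular-agent update matrix `A̅`. -/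
def Abar (n1 n2 r1 r2 : ℕ) (ws wd : ℝ) :
    Matrix (Fin (r1 + r2)) (Fin (r1 + r2)) ℝ :=
  blk r1 r2 (1 - ws * n1 - wd * n2) ws wd (1 - ws * n2 - wd * n1) ws

lemma key (r : ℕ) (ka la : ℕ) (hk : ka < r) (hl : la < r) (d o e p : ℝ) :
    ∑ i ∈ Finset.range r, ((if ka = i then d else 0) + o) * ((if i = la then e else 0) + p)
    = (if ka = la then d * e else 0) + d * p + o * e + r * (o * p) := by
  have h : ∀ i, ((if ka = i then d else 0) + o) * ((if i = la then e else 0) + p)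
      = (if ka = i then (if i = la then d * e else 0) else 0)
        + (if ka = i then d * p else 0) + (if i = la then o * e else 0) + o * p := by
    intro i; split_ifs <;> ring
  simp only [h, Finset.sum_add_distrib, Finset.sum_ite_eq, Finset.sum_ite_eq',
    Finset.mem_range, hk, hl, if_true, Finset.sum_const, Finset.card_range, nsmul_eq_mul]

lemma key2 (r : ℕ) (ka : ℕ) (hk : ka < r) (d o c : ℝ) :
    ∑ i ∈ Finset.range r, ((if ka = i then d else 0) + o) * c = d * c + r * (o * c) := by
  have h : ∀ i, ((if ka = i then d else 0) + o) * c
      = (if ka = i then d * c else 0) + o * c := by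
    intro i; split_ifs <;> ring
  simp only [h, Finset.sum_add_distrib, Finset.sum_ite_eq, Finset.mem_range, hk, if_true,
    Finset.sum_const, Finset.card_range, nsmul_eq_mul]

lemma key3 (r : ℕ) (la : ℕ) (hl : la < r) (c e p : ℝ) :
    ∑ i ∈ Finset.range r, c * ((if i = la then e else 0) + p) = c * e + r * (c * p) := by
  have h : ∀ i, c * ((if i = la then e else 0) + p)
      = (if i = la then c * e else 0) + c * p := by
    intro i; split_ifs <;> ring
  simp only [h, Finset.sum_add_distrib, Finset.sum_ite_eq', Finset.mem_range, hl, if_true,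
    Finset.sum_const, Finset.card_range, nsmul_eq_mul]

lemma blk_mul_eq_one (r1 r2 : ℕ) (d1 o1 off d2 o2 e1 p1 poff e2 p2 : ℝ)
    (h1 : d1 * e1 = 1)
    (h2 : d1 * p1 + o1 * e1 + r1 * (o1 * p1) + r2 * (off * poff) = 0)
    (h3 : d1 * poff + r1 * (o1 * poff) + off * e2 + r2 * (off * p2) = 0)
    (h4 : off * e1 + r1 * (off * p1) + d2 * poff + r2 * (o2 * poff) = 0)
    (h5 : r1 * (off * poff) + d2 * p2 + o2 * e2 + r2 * (o2 * p2) = 0)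
    (h6 : d2 * e2 = 1) :
    blk r1 r2 d1 o1 off d2 o2 * blk r1 r2 e1 p1 poff e2 p2 = 1 := by
  ext k l
  have hj : ∀ j : Fin r2, ¬ (r1 + (j : ℕ) < r1) := fun j => by omega
  rw [Matrix.mul_apply, Fin.sum_univ_add, Matrix.one_apply]
  rcases Nat.lt_or_ge (k : ℕ) r1 with hk | hk <;> rcases Nat.lt_or_ge (l : ℕ) r1 with hl | hl
  · -- both in block 1
    simp only [blk, Fin.coe_castAdd, Fin.coe_natAdd, Fin.is_lt, if_true, hk, hl, hj,
      if_false, Fin.ext_iff]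
    rw [Fin.sum_univ_eq_sum_range
        (fun i => ((if (k : ℕ) = i then d1 else 0) + o1) * ((if i = (l : ℕ) then e1 else 0) + p1)),
      key r1 (k : ℕ) (l : ℕ) hk hl]
    simp only [Finset.sum_const, Finset.card_univ, Fintype.card_fin, nsmul_eq_mul]
    split_ifs with h
    · linarith
    · linarith
  · -- k block 1, l block 2
    have hkl : ¬ ((k : ℕ) = (l : ℕ)) := by omega
    simp only [blk, Fin.coe_castAdd, Fin.coe_natAdd, Fin.is_lt, if_true, hk, hj,
      Nat.not_lt.2 hl, if_false, Fin.ext_iff, hkl]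
    have hc : ∀ i : ℕ, (r1 + i = (l : ℕ)) = (i = (l : ℕ) - r1) := fun i => propext (by omega)
    simp only [hc]
    rw [Fin.sum_univ_eq_sum_range (fun i => ((if (k : ℕ) = i then d1 else 0) + o1) * poff),
      key2 r1 (k : ℕ) hk,
      Fin.sum_univ_eq_sum_range (fun i => off * ((if i = (l : ℕ) - r1 then e2 else 0) + p2)),
      key3 r2 ((l : ℕ) - r1) (by omega)]
    linarith
  · -- k block 2, l block 1
    have hkl : ¬ ((k : ℕ) = (l : ℕ)) := by omega
    simp only [blk, Fin.coe_castAdd, Fin.coe_natAdd, Fin.is_lt, if_true, hl, hj,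
      Nat.not_lt.2 hk, if_false, Fin.ext_iff, hkl]
    have hc : ∀ i : ℕ, ((k : ℕ) = r1 + i) = ((k : ℕ) - r1 = i) := fun i => propext (by omega)
    simp only [hc]
    rw [Fin.sum_univ_eq_sum_range (fun i => off * ((if i = (l : ℕ) then e1 else 0) + p1)),
      key3 r1 (l : ℕ) hl,
      Fin.sum_univ_eq_sum_range
        (fun i => ((if (k : ℕ) - r1 = i then d2 else 0) + o2) * poff),
      key2 r2 ((k : ℕ) - r1) (by omega)]
    linarith
  · -- both block 2
    simp only [blk, Fin.coe_castAdd, Fin.coe_natAdd, Fin.is_lt, if_true, hj,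
      Nat.not_lt.2 hk, Nat.not_lt.2 hl, if_false, Fin.ext_iff]
    have hc : ∀ i : ℕ, ((k : ℕ) = r1 + i) = ((k : ℕ) - r1 = i) := fun i => propext (by omega)
    have hc' : ∀ i : ℕ, (r1 + i = (l : ℕ)) = (i = (l : ℕ) - r1) := fun i => propext (by omega)
    simp only [hc, hc']
    rw [Fin.sum_univ_eq_sum_range
        (fun i => ((if (k : ℕ) - r1 = i then d2 else 0) + o2)
          * ((if i = (l : ℕ) - r1 then e2 else 0) + p2)),
      key r2 ((k : ℕ) - r1) ((l : ℕ) - r1) (by omega) (by omega)]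
    simp only [Finset.sum_const, Finset.card_univ, Fintype.card_fin, nsmul_eq_mul]
    have hkl : ((k : ℕ) - r1 = (l : ℕ) - r1) ↔ ((k : ℕ) = (l : ℕ)) := by omega
    rw [if_congr hkl rfl rfl]
    split_ifs with h
    · linarith
    · linarith

set_option maxHeartbeats 1000000 in
/-- `I - A̅` has the stated block form, and its inverse has the block form
`[[(1/a1)(I - w̃s1 J), w̃d J], [w̃d J, (1/a2)(I - w̃s2 J)]]`. -/
theorem stmt_6 (n1 n2 r1 r2 : ℕ) (hr1 : 1 ≤ r1) (hr2 : 1 ≤ r2)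
    (h1 : r1 ≤ n1) (h2 : r2 ≤ n2) (hs : r1 + r2 < n1 + n2)
    (ws wd : ℝ) (hws : 0 < ws) (hwd : 0 < wd)
    (hnorm : ws * ((n1 : ℝ)^2 + (n2 : ℝ)^2) + 2 * wd * n1 * n2 = 1) :
    let a1 : ℝ := ws * n1 + wd * n2
    let a2 : ℝ := ws * n2 + wd * n1
    (1 - Abar n1 n2 r1 r2 ws wd = blk r1 r2 a1 (-ws) (-wd) a2 (-ws)) ∧
    (∃ ws1 ws2 wdt : ℝ,
      (1 - Abar n1 n2 r1 r2 ws wd)⁻¹ =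
        blk r1 r2 (1 / a1) (-(ws1 / a1)) wdt (1 / a2) (-(ws2 / a2))) := by
  intro a1 a2
  -- basic positivity facts
  have hn1 : (1 : ℝ) ≤ (n1 : ℝ) := by exact_mod_cast le_trans hr1 h1
  have hn2 : (1 : ℝ) ≤ (n2 : ℝ) := by exact_mod_cast le_trans hr2 h2
  have hx1 : (0 : ℝ) ≤ (n1 : ℝ) - r1 := by
    have : (r1 : ℝ) ≤ n1 := by exact_mod_cast h1
    linarith
  have hx2 : (0 : ℝ) ≤ (n2 : ℝ) - r2 := by
    have : (r2 : ℝ) ≤ n2 := by exact_mod_cast h2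
    linarith
  have hx : (0 : ℝ) < ((n1 : ℝ) - r1) + ((n2 : ℝ) - r2) := by
    have : (r1 : ℝ) + r2 < (n1 : ℝ) + n2 := by exact_mod_cast hs
    linarith
  have ha1 : (0 : ℝ) < a1 := by
    have : (0 : ℝ) < ws * n1 := mul_pos hws (by linarith)
    have : (0 : ℝ) < wd * n2 := mul_pos hwd (by linarith)
    simp only [a1]; positivity
  have ha2 : (0 : ℝ) < a2 := by simp only [a2]; positivity
  have hfirst : 1 - Abar n1 n2 r1 r2 ws wd = blk r1 r2 a1 (-ws) (-wd) a2 (-ws) := by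
    ext k l
    simp only [Matrix.sub_apply, Matrix.one_apply, Abar, blk, a1, a2, Fin.ext_iff]
    split_ifs
    all_goals try (exfalso; omega)
    all_goals ring
  refine ⟨hfirst, ?_⟩
  -- the inverse
  set p : ℝ := a1 - ws * r1 with hp
  set q : ℝ := a2 - ws * r2 with hq
  set D : ℝ := p * q - wd ^ 2 * r1 * r2 with hD
  have hDpos : 0 < D := by
    have hDeq : D = ws ^ 2 * ((n1 : ℝ) - r1) * ((n2 : ℝ) - r2)
        + ws * wd * ((n1 : ℝ) - r1) * n1 + ws * wd * n2 * ((n2 : ℝ) - r2)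
        + wd ^ 2 * (((n2 : ℝ) - r2) * r1 + ((n1 : ℝ) - r1) * n2) := by
      simp only [hD, hp, hq, a1, a2]; ring
    rw [hDeq]
    have hwswd : 0 < ws * wd := mul_pos hws hwd
    nlinarith [mul_nonneg hx1 hx2, mul_nonneg hx2 (Nat.cast_nonneg r1 : (0:ℝ) ≤ r1),
      mul_nonneg hx1 (by linarith : (0:ℝ) ≤ (n2:ℝ)),
      mul_pos hwswd (by nlinarith : (0:ℝ) < ((n1:ℝ) - r1) * n1 + n2 * ((n2:ℝ) - r2))]
  have hDne : D ≠ 0 := ne_of_gt hDpos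
  have ha1ne : a1 ≠ 0 := ne_of_gt ha1
  have ha2ne : a2 ≠ 0 := ne_of_gt ha2
  have hr1ne : (r1 : ℝ) ≠ 0 := Nat.cast_ne_zero.mpr (by omega)
  have hr2ne : (r2 : ℝ) ≠ 0 := Nat.cast_ne_zero.mpr (by omega)
  clear_value D p q a1 a2
  refine ⟨(D - a1 * q) / ((r1 : ℝ) * D), (D - a2 * p) / ((r2 : ℝ) * D), wd / D, ?_⟩
  rw [hfirst]
  apply Matrix.inv_eq_right_inv
  apply blk_mul_eq_one
  · field_simp
  · field_simp
    simp only [hD, hp, hq]; ring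
  · field_simp
    simp only [hD, hp, hq]; ring
  · field_simp
    simp only [hD, hp, hq]; ring
  · field_simp
    simp only [hD, hp, hq]; ring
  · field_simp
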